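/- Suppose σ and σ̃ are k-simplices in ℝ^m with |‖pᵢ − pⱼ‖ − ‖p̃ᵢ − p̃ⱼ‖| ≤ ξ₀·L(σ) for all i < j. Let P, P̃ be the matrices of edge vectors from p₀ and p̃₀. If ξ₀ ≤ (η·t(σ)/2)² with η² ≤ 1, then s_k(P̃) ≥ (1 − η²)·s_k(P), and t(σ̃)·L(σ̃) ≥ (1 − η²)·t(σ)·L(σ)/√k, and t(σ̃) ≥ (4/(5√k))·(1 − η²)·t(σ). -/

import Mathlib

open Matrix Metric
open scoped Classical BigOperators

noncomputable section

/-- Euclidean space ℝ^m. -/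
abbrev E (m : ℕ) := EuclideanSpace ℝ (Fin m)

/-- Euclidean norm of a plain vector. -/
noncomputable def euclNorm {n : ℕ} (v : Fin n → ℝ) : ℝ := Real.sqrt (∑ i, v i ^ 2)

/-- Largest singular value (operator norm) of a matrix. -/
noncomputable def largeSV {m k : ℕ} (P : Matrix (Fin m) (Fin k) ℝ) : ℝ :=
  ⨆ x : {x : Fin k → ℝ // euclNorm x = 1}, euclNorm (P.mulVec x)

/-- Smallest singular value of a matrix. -/
noncomputable def smallSV {m k : ℕ} (P : Matrix (Fin m) (Fin k) ℝ) : ℝ :=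
  ⨅ x : {x : Fin k → ℝ // euclNorm x = 1}, euclNorm (P.mulVec x)

/-- Matrix of edge vectors pᵢ − p₀ of a k-simplex. -/
noncomputable def vertMatrix {m k : ℕ} (p : Fin (k+1) → E m) : Matrix (Fin m) (Fin k) ℝ :=
  fun a j => p j.succ a - p 0 a

/-- Pseudo-inverse (PᵀP)⁻¹Pᵀ of a matrix of full column rank. -/
noncomputable def pseudoInv {m k : ℕ} (P : Matrix (Fin m) (Fin k) ℝ) :
    Matrix (Fin k) (Fin m) ℝ := (Pᵀ * P)⁻¹ * Pᵀ

/-- Longest edge length of a simplex given by its vertices. -/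
noncomputable def longEdge {m k : ℕ} (p : Fin (k+1) → E m) : ℝ :=
  ⨆ i, ⨆ j, dist (p i) (p j)

/-- Altitude of vertex i: distance to affine hull of the opposite facet. -/
noncomputable def altitude {m k : ℕ} (p : Fin (k+1) → E m) (i : Fin (k+1)) : ℝ :=
  Metric.infDist (p i) (↑(affineSpan ℝ (p '' {j | j ≠ i})) : Set (E m))

/-- Thickness of a k-simplex: 1 if k = 0, else min altitude / (k · longest edge). -/
noncomputable def thickness {m k : ℕ} (p : Fin (k+1) → E m) : ℝ :=
  if k = 0 then 1 else (⨅ i, altitude p i) / (k * longEdge p)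

/-- Longest edge of a finite vertex set. -/
noncomputable def fLongEdge {m : ℕ} (s : Finset (E m)) : ℝ := Metric.diam (s : Set (E m))

/-- Minimal altitude of a finite vertex set. -/
noncomputable def fMinAlt {m : ℕ} (s : Finset (E m)) : ℝ :=
  ⨅ p : {p // p ∈ s},
    Metric.infDist (p : E m) (↑(affineSpan ℝ ((s.erase (p : E m)) : Set (E m))) : Set (E m))

/-- Thickness of a simplex given as a finite vertex set. -/
noncomputable def fThickness {m : ℕ} (s : Finset (E m)) : ℝ :=
  if s.card ≤ 1 then 1 else fMinAlt s / ((s.card - 1 : ℕ) * fLongEdge s)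

/-- A simplex (finite vertex set) is Γ₀-good if every j-face has thickness ≥ Γ₀^j. -/
def isGood {m : ℕ} (Γ₀ : ℝ) (s : Finset (E m)) : Prop :=
  ∀ t ⊆ s, t.Nonempty → fThickness t ≥ Γ₀ ^ (t.card - 1)

/-- A Γ₀-flake: not Γ₀-good, but every facet is Γ₀-good. -/
def isFlake {m : ℕ} (Γ₀ : ℝ) (s : Finset (E m)) : Prop :=
  ¬ isGood Γ₀ s ∧ ∀ p ∈ s, isGood Γ₀ (s.erase p)

/-!
If `x_l ≠ 0`, the point `p_{r.succAbove l} - x_l⁻¹ • edgeComb p r x` lies on the facet opposite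
`p_{r.succAbove l}`, so `‖edgeComb p r x‖ ≥ |x_l| · altitude ≥ t k L |x_l|` and, summing over `l`,
`‖edgeComb p r x‖ ≥ t L ∑ |x_l|`. By polarization the Gram matrices of the edge vectors of `σ` and
`σ̃` at `p_r` differ entrywise by at most `4 ξ₀ L²`, so
`‖edgeComb q r x‖² ≥ ‖edgeComb p r x‖² - 4 ξ₀ L² (∑ |x_l|)² ≥ (1 - η²) ‖edgeComb p r x‖²`.
For `r = 0` this compares the singular values. For `r ≠ i` and `x_l = 1` at `i = r.succAbove l`
it bounds every altitude of `σ̃` below by `(1 - η²) t k L`, which together with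
`L(σ̃) ≤ (1 + ξ₀) L ≤ 5/4 L` gives the thickness bounds.
-/

section Perturbation

variable {F : Type*} [NormedAddCommGroup F] [InnerProductSpace ℝ F]

open RealInnerProductSpace in
theorem sq_norm_sum_smul {ι : Type*} [Fintype ι] (u : ι → F) (x : ι → ℝ) :
    ‖∑ i, x i • u i‖ ^ 2 = ∑ i, ∑ j, x i * x j * ⟪u i, u j⟫ := by
  rw [← real_inner_self_eq_norm_sq, sum_inner]
  simp only [inner_sum, real_inner_smul_left, real_inner_smul_right]
  exact Finset.sum_congr rfl fun i _ => Finset.sum_congr rfl fun j _ => by ring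

open RealInnerProductSpace in
theorem abs_sq_norm_sum_smul_sub_le {ι : Type*} [Fintype ι] (u v : ι → F) (x : ι → ℝ)
    {ε : ℝ} (h : ∀ i j, |⟪v i, v j⟫ - ⟪u i, u j⟫| ≤ ε) :
    |‖∑ i, x i • v i‖ ^ 2 - ‖∑ i, x i • u i‖ ^ 2| ≤ ε * (∑ i, |x i|) ^ 2 := by
  rw [sq_norm_sum_smul, sq_norm_sum_smul, ← Finset.sum_sub_distrib]
  calc |∑ i, (∑ j, x i * x j * ⟪v i, v j⟫ - ∑ j, x i * x j * ⟪u i, u j⟫)|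
      ≤ ∑ i, ∑ j, |x i| * |x j| * ε := by
        refine (Finset.abs_sum_le_sum_abs _ _).trans (Finset.sum_le_sum fun i _ => ?_)
        rw [← Finset.sum_sub_distrib]
        refine (Finset.abs_sum_le_sum_abs _ _).trans (Finset.sum_le_sum fun j _ => ?_)
        rw [← mul_sub, abs_mul, abs_mul]
        exact mul_le_mul_of_nonneg_left (h i j) (by positivity)
    _ = ε * (∑ i, |x i|) ^ 2 := by
        rw [sq, Finset.sum_mul_sum, Finset.mul_sum]
        simp only [Finset.mul_sum]
        exact Finset.sum_congr rfl fun i _ => Finset.sum_congr rfl fun j _ => by ring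

theorem abs_sq_sub_sq_le {a b δ L : ℝ} (h : |a - b| ≤ δ) (hb : 0 ≤ b) (hbL : b ≤ L)
    (hδ : δ ≤ L / 4) : |a ^ 2 - b ^ 2| ≤ 9 / 4 * δ * L := by
  have hδ0 : 0 ≤ δ := (abs_nonneg _).trans h
  rw [abs_le] at h ⊢
  constructor <;> nlinarith

open RealInnerProductSpace in
theorem abs_inner_sub_inner_le {u v u' v' : F} {δ L : ℝ}
    (hu : |‖u'‖ - ‖u‖| ≤ δ) (hv : |‖v'‖ - ‖v‖| ≤ δ) (huv : |‖u' - v'‖ - ‖u - v‖| ≤ δ)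
    (huL : ‖u‖ ≤ L) (hvL : ‖v‖ ≤ L) (huvL : ‖u - v‖ ≤ L) (hδ : δ ≤ L / 4) :
    |⟪u', v'⟫ - ⟪u, v⟫| ≤ 4 * δ * L := by
  have hδ0 : 0 ≤ δ := (abs_nonneg _).trans hu
  have h₁ := abs_le.1 (abs_sq_sub_sq_le hu (norm_nonneg _) huL hδ)
  have h₂ := abs_le.1 (abs_sq_sub_sq_le hv (norm_nonneg _) hvL hδ)
  have h₃ := abs_le.1 (abs_sq_sub_sq_le huv (norm_nonneg _) huvL hδ)
  have e := norm_sub_sq_real u v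
  have e' := norm_sub_sq_real u' v'
  have hL : 0 ≤ L := (norm_nonneg _).trans huL
  rw [abs_le]
  constructor <;> linarith [mul_nonneg hδ0 hL]

end Perturbation

section Simplex

variable {m k : ℕ}

def edgeComb (p : Fin (k+1) → E m) (r : Fin (k+1)) (x : Fin k → ℝ) : E m :=
  ∑ l, x l • (p (r.succAbove l) - p r)

theorem euclNorm_eq_norm {n : ℕ} (v : Fin n → ℝ) : euclNorm v = ‖(WithLp.toLp 2 v : E n)‖ := by
  simp [euclNorm, EuclideanSpace.norm_eq]

theorem euclNorm_vertMatrix_mulVec (p : Fin (k+1) → E m) (x : Fin k → ℝ) :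
    euclNorm (vertMatrix p *ᵥ x) = ‖edgeComb p 0 x‖ := by
  rw [euclNorm_eq_norm]
  congr 1
  ext a
  simp [edgeComb, vertMatrix, mulVec, dotProduct, mul_comm]

theorem mem_affineSpan_facet_iff {p : Fin (k+1) → E m} {r : Fin (k+1)} {l : Fin k} {y : E m} :
    y ∈ affineSpan ℝ (p '' {j | j ≠ r.succAbove l}) ↔
      ∃ x : Fin k → ℝ, x l = 1 ∧ p (r.succAbove l) - y = edgeComb p r x := by
  set S := p '' {j | j ≠ r.succAbove l}
  have hr : p r ∈ S := ⟨r, (Fin.succAbove_ne r l).symm, rfl⟩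
  have hedge : ∀ j ≠ l, p (r.succAbove j) - p r ∈ vectorSpan ℝ S := fun j hj =>
    vsub_mem_vectorSpan ℝ ⟨r.succAbove j, fun h => hj (Fin.succAbove_right_injective h), rfl⟩ hr
  constructor
  · intro hy
    set f : Fin k → E m := fun j => if j = l then 0 else p (r.succAbove j) - p r
    have hspan : y - p r ∈ Submodule.span ℝ (Set.range f) := by
      have h := AffineSubspace.vsub_mem_direction hy (subset_affineSpan ℝ S hr)
      rw [direction_affineSpan, vectorSpan_eq_span_vsub_set_right ℝ hr] at h
      refine Submodule.span_mono ?_ h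
      rintro _ ⟨_, ⟨j, hj, rfl⟩, rfl⟩
      rcases Fin.eq_self_or_eq_succAbove r j with rfl | ⟨j, rfl⟩
      · exact ⟨l, by simp [f]⟩
      · have hjl : j ≠ l := fun h => hj (h ▸ rfl)
        exact ⟨j, by simp [f, hjl]⟩
    obtain ⟨c, hc⟩ := (Submodule.mem_span_range_iff_exists_fun ℝ).1 hspan
    refine ⟨fun j => if j = l then 1 else -c j, by simp, ?_⟩
    have hterm : ∀ j, (if j = l then 1 else -c j) • (p (r.succAbove j) - p r)
        = (if j = l then p (r.succAbove l) - p r else 0) - c j • f j := fun j => by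
      by_cases hj : j = l <;> simp [f, hj, neg_smul]
    simp only [edgeComb, hterm, Finset.sum_sub_distrib, Finset.sum_ite_eq', Finset.mem_univ,
      if_true, hc]
    abel
  · rintro ⟨x, hxl, hx⟩
    have hdir : y - p r ∈ (affineSpan ℝ S).direction := by
      have hsplit := Finset.add_sum_erase Finset.univ
        (fun j => x j • (p (r.succAbove j) - p r)) (Finset.mem_univ l)
      have hy : y - p r = -∑ j ∈ Finset.univ.erase l, x j • (p (r.succAbove j) - p r) := by
        rw [edgeComb, ← hsplit, hxl, one_smul] at hx
        calc y - p r = (p (r.succAbove l) - p r) - (p (r.succAbove l) - y) := by abel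
          _ = _ := by rw [hx]; abel
      rw [direction_affineSpan, hy]
      exact neg_mem (Submodule.sum_mem _ fun j hj =>
        Submodule.smul_mem _ _ (hedge j (Finset.ne_of_mem_erase hj)))
    simpa using AffineSubspace.vadd_mem_of_mem_direction hdir (subset_affineSpan ℝ S hr)

theorem abs_mul_altitude_le_norm_edgeComb (p : Fin (k+1) → E m) (r : Fin (k+1))
    (x : Fin k → ℝ) (l : Fin k) : |x l| * altitude p (r.succAbove l) ≤ ‖edgeComb p r x‖ := by
  rcases eq_or_ne (x l) 0 with h | h
  · simp [h]
  set y := p (r.succAbove l) - (x l)⁻¹ • edgeComb p r x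
  have hy : y ∈ affineSpan ℝ (p '' {j | j ≠ r.succAbove l}) :=
    mem_affineSpan_facet_iff.2 ⟨(x l)⁻¹ • x, by simp [h],
      by simp [y, edgeComb, Finset.smul_sum, smul_smul]⟩
  calc |x l| * altitude p (r.succAbove l) ≤ |x l| * dist (p (r.succAbove l)) y :=
        mul_le_mul_of_nonneg_left (infDist_le_dist_of_mem hy) (abs_nonneg _)
    _ = ‖edgeComb p r x‖ := by
        rw [dist_eq_norm, sub_sub_cancel, norm_smul, norm_inv, Real.norm_eq_abs,
          mul_inv_cancel_left₀ (abs_ne_zero.2 h)]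

theorem dist_le_longEdge (p : Fin (k+1) → E m) (i j : Fin (k+1)) :
    dist (p i) (p j) ≤ longEdge p :=
  (le_ciSup (Set.finite_range _).bddAbove j).trans
    (le_ciSup (f := fun i => ⨆ j, dist (p i) (p j)) (Set.finite_range _).bddAbove i)

theorem longEdge_nonneg (p : Fin (k+1) → E m) : 0 ≤ longEdge p :=
  dist_nonneg.trans (dist_le_longEdge p 0 0)

theorem abs_longEdge_sub_longEdge_le {p q : Fin (k+1) → E m} {δ : ℝ}
    (h : ∀ i j, |dist (p i) (p j) - dist (q i) (q j)| ≤ δ) :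
    |longEdge p - longEdge q| ≤ δ := by
  rw [abs_sub_le_iff, sub_le_iff_le_add, sub_le_iff_le_add]
  constructor
  · refine ciSup_le fun i => ciSup_le fun j => ?_
    linarith [(abs_le.1 (h i j)).2, dist_le_longEdge q i j]
  · refine ciSup_le fun i => ciSup_le fun j => ?_
    linarith [(abs_le.1 (h i j)).1, dist_le_longEdge p i j]

theorem thickness_nonneg (p : Fin (k+1) → E m) : 0 ≤ thickness p := by
  unfold thickness
  split_ifs
  · exact zero_le_one
  · exact div_nonneg (le_ciInf fun _ => infDist_nonneg)
      (mul_nonneg k.cast_nonneg (longEdge_nonneg p))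

theorem thickness_mul_le_altitude (p : Fin (k+1) → E m) (i : Fin (k+1)) :
    thickness p * (k * longEdge p) ≤ altitude p i := by
  unfold thickness
  split_ifs with hk
  · simp [hk, altitude, infDist_nonneg]
  rcases eq_or_ne ((k : ℝ) * longEdge p) 0 with h | h
  · simp [h, altitude, infDist_nonneg]
  rw [div_mul_cancel₀ _ h]
  exact ciInf_le ⟨0, by rintro _ ⟨j, rfl⟩; exact infDist_nonneg⟩ i

theorem thickness_mul_eq_iInf_altitude (p : Fin (k+1) → E m) (hk : k ≠ 0)
    (hL : longEdge p ≠ 0) : thickness p * (k * longEdge p) = ⨅ i, altitude p i := by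
  rw [thickness, if_neg hk, div_mul_cancel₀ _ (mul_ne_zero (Nat.cast_ne_zero.2 hk) hL)]

theorem thickness_le_one (p : Fin (k+1) → E m) : thickness p ≤ 1 := by
  unfold thickness
  split_ifs with hk
  · exact le_rfl
  obtain ⟨l⟩ : Nonempty (Fin k) := Fin.pos_iff_nonempty.1 (Nat.pos_of_ne_zero hk)
  refine div_le_one_of_le₀ ?_ (mul_nonneg k.cast_nonneg (longEdge_nonneg p))
  calc (⨅ i, altitude p i) ≤ altitude p 0 :=
        ciInf_le ⟨0, by rintro _ ⟨j, rfl⟩; exact infDist_nonneg⟩ 0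
    _ ≤ dist (p 0) (p l.succ) :=
        infDist_le_dist_of_mem (subset_affineSpan ℝ _ ⟨l.succ, Fin.succ_ne_zero l, rfl⟩)
    _ ≤ longEdge p := dist_le_longEdge p 0 l.succ
    _ ≤ k * longEdge p :=
        le_mul_of_one_le_left (longEdge_nonneg p) (Nat.one_le_cast.2 (Nat.pos_of_ne_zero hk))

theorem longEdge_pos_of_thickness_pos {p : Fin (k+1) → E m} (hk : k ≠ 0)
    (h : 0 < thickness p) : 0 < longEdge p := by
  refine (longEdge_nonneg p).lt_of_ne fun hL => h.ne' ?_
  rw [thickness, if_neg hk, ← hL, mul_zero, div_zero]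

theorem mul_abs_le_norm_edgeComb (p : Fin (k+1) → E m) (r : Fin (k+1)) (x : Fin k → ℝ)
    (l : Fin k) : thickness p * (k * longEdge p) * |x l| ≤ ‖edgeComb p r x‖ := by
  rw [mul_comm]
  exact (mul_le_mul_of_nonneg_left (thickness_mul_le_altitude p _) (abs_nonneg _)).trans
    (abs_mul_altitude_le_norm_edgeComb p r x l)

theorem thickness_mul_longEdge_mul_sum_abs_le (p : Fin (k+1) → E m) (r : Fin (k+1))
    (x : Fin k → ℝ) : thickness p * longEdge p * ∑ l, |x l| ≤ ‖edgeComb p r x‖ := by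
  rcases Nat.eq_zero_or_pos k with rfl | hk
  · simp
  refine le_of_mul_le_mul_left ?_ (Nat.cast_pos.2 hk : (0 : ℝ) < k)
  calc (k : ℝ) * (thickness p * longEdge p * ∑ l, |x l|)
      = ∑ l, thickness p * (k * longEdge p) * |x l| := by
        rw [Finset.mul_sum, Finset.mul_sum]
        exact Finset.sum_congr rfl fun l _ => by ring
    _ ≤ ∑ _l : Fin k, ‖edgeComb p r x‖ :=
        Finset.sum_le_sum fun l _ => mul_abs_le_norm_edgeComb p r x l
    _ = k * ‖edgeComb p r x‖ := by simp

theorem abs_sq_norm_edgeComb_sub_le {p q : Fin (k+1) → E m} {δ : ℝ}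
    (h : ∀ i j, |dist (p i) (p j) - dist (q i) (q j)| ≤ δ) (hδ : δ ≤ longEdge p / 4)
    (r : Fin (k+1)) (x : Fin k → ℝ) :
    |‖edgeComb q r x‖ ^ 2 - ‖edgeComb p r x‖ ^ 2| ≤ 4 * δ * longEdge p * (∑ l, |x l|) ^ 2 := by
  have h' : ∀ i j, |‖q i - q j‖ - ‖p i - p j‖| ≤ δ := fun i j => by
    rw [← dist_eq_norm, ← dist_eq_norm, abs_sub_comm]; exact h i j
  have hL : ∀ i j, ‖p i - p j‖ ≤ longEdge p := fun i j => by
    rw [← dist_eq_norm]; exact dist_le_longEdge p i j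
  refine abs_sq_norm_sum_smul_sub_le _ _ x fun i j => abs_inner_sub_inner_le (h' _ _) (h' _ _)
    ?_ (hL _ _) (hL _ _) ?_ hδ
  · rw [sub_sub_sub_cancel_right, sub_sub_sub_cancel_right]; exact h' _ _
  · rw [sub_sub_sub_cancel_right]; exact hL _ _

theorem le_one_div_four_of_le_sq {p : Fin (k+1) → E m} {ξ₀ η : ℝ}
    (hξ : ξ₀ ≤ (η * thickness p / 2) ^ 2) (hη : η ^ 2 ≤ 1) : ξ₀ ≤ 1 / 4 := by
  have ht := thickness_le_one p
  have ht0 := thickness_nonneg p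
  nlinarith [sq_nonneg η, mul_le_one₀ ht ht0 ht]

theorem one_sub_sq_mul_norm_edgeComb_le {p q : Fin (k+1) → E m} {ξ₀ η : ℝ}
    (h : ∀ i j, |dist (p i) (p j) - dist (q i) (q j)| ≤ ξ₀ * longEdge p)
    (hξ : ξ₀ ≤ (η * thickness p / 2) ^ 2) (hη : η ^ 2 ≤ 1) (r : Fin (k+1)) (x : Fin k → ℝ) :
    (1 - η ^ 2) * ‖edgeComb p r x‖ ≤ ‖edgeComb q r x‖ := by
  set S := ∑ l, |x l|
  have ht0 := thickness_nonneg p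
  have hL := longEdge_nonneg p
  have hξ4 : 4 * ξ₀ ≤ (η * thickness p) ^ 2 := by rw [div_pow] at hξ; linarith
  have hξ14 := le_one_div_four_of_le_sq hξ hη
  have hpert := (abs_le.1 (abs_sq_norm_edgeComb_sub_le h
    (by linarith [mul_le_mul_of_nonneg_right hξ14 hL]) r x)).1
  have herr : 4 * (ξ₀ * longEdge p) * longEdge p * S ^ 2 ≤ η ^ 2 * ‖edgeComb p r x‖ ^ 2 := calc
    _ = 4 * ξ₀ * (longEdge p * S) ^ 2 := by ring
    _ ≤ (η * thickness p) ^ 2 * (longEdge p * S) ^ 2 := by gcongr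
    _ = η ^ 2 * (thickness p * longEdge p * S) ^ 2 := by ring
    _ ≤ η ^ 2 * ‖edgeComb p r x‖ ^ 2 := by
        gcongr
        exact thickness_mul_longEdge_mul_sum_abs_le p r x
  have h1η : 0 ≤ 1 - η ^ 2 := by linarith
  have hη' : (1 - η ^ 2) ^ 2 * ‖edgeComb p r x‖ ^ 2 ≤ (1 - η ^ 2) * ‖edgeComb p r x‖ ^ 2 := by
    gcongr
    nlinarith [sq_nonneg η]
  have hsq : ((1 - η ^ 2) * ‖edgeComb p r x‖) ^ 2 ≤ ‖edgeComb q r x‖ ^ 2 := by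
    rw [mul_pow]; linarith
  exact (pow_le_pow_iff_left₀ (by positivity) (norm_nonneg _) two_ne_zero).1 hsq

theorem one_sub_sq_mul_le_altitude {p q : Fin (k+1) → E m} {ξ₀ η : ℝ} (hk : k ≠ 0)
    (h : ∀ i j, |dist (p i) (p j) - dist (q i) (q j)| ≤ ξ₀ * longEdge p)
    (hξ : ξ₀ ≤ (η * thickness p / 2) ^ 2) (hη : η ^ 2 ≤ 1) (i : Fin (k+1)) :
    (1 - η ^ 2) * (thickness p * (k * longEdge p)) ≤ altitude q i := by
  have : Nontrivial (Fin (k+1)) := Fin.nontrivial_iff_two_le.2 (by omega)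
  obtain ⟨r, hr⟩ := exists_ne i
  obtain ⟨l, rfl⟩ := Fin.exists_succAbove_eq hr.symm
  refine (le_infDist ?_).2 fun y hy => ?_
  · exact ⟨q r, subset_affineSpan ℝ _ ⟨r, (Fin.succAbove_ne r l).symm, rfl⟩⟩
  obtain ⟨x, hxl, hx⟩ := mem_affineSpan_facet_iff.1 hy
  calc (1 - η ^ 2) * (thickness p * (k * longEdge p))
      ≤ (1 - η ^ 2) * ‖edgeComb p r x‖ := by
        gcongr
        simpa [hxl] using mul_abs_le_norm_edgeComb p r x l
    _ ≤ ‖edgeComb q r x‖ := one_sub_sq_mul_norm_edgeComb_le h hξ hη r x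
    _ = dist (q (r.succAbove l)) y := by rw [dist_eq_norm, hx]

end Simplex

theorem mul_smallSV_le_smallSV {m m' k : ℕ} {P : Matrix (Fin m) (Fin k) ℝ}
    {Q : Matrix (Fin m') (Fin k) ℝ} {c : ℝ} (hc : 0 ≤ c)
    (h : ∀ x, c * euclNorm (P *ᵥ x) ≤ euclNorm (Q *ᵥ x)) : c * smallSV P ≤ smallSV Q := by
  rcases isEmpty_or_nonempty {x : Fin k → ℝ // euclNorm x = 1}
  · simp [smallSV, Real.iInf_of_isEmpty]
  refine le_ciInf fun x => (mul_le_mul_of_nonneg_left ?_ hc).trans (h x)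
  exact ciInf_le ⟨0, by rintro _ ⟨y, rfl⟩; exact Real.sqrt_nonneg _⟩ x

/-- Thickness under distortion. -/
theorem stmt3 {m k : ℕ} (p q : Fin (k+1) → E m) (ξ₀ η : ℝ)
    (hξ0 : 0 ≤ ξ₀) (hnd : 0 < thickness p)
    (h : ∀ i j : Fin (k+1), i < j →
      |dist (p i) (p j) - dist (q i) (q j)| ≤ ξ₀ * longEdge p)
    (hξ : ξ₀ ≤ (η * thickness p / 2) ^ 2) (hη : η ^ 2 ≤ 1) :
    smallSV (vertMatrix q) ≥ (1 - η ^ 2) * smallSV (vertMatrix p) ∧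
    thickness q * longEdge q ≥ (1 - η ^ 2) * thickness p * longEdge p / Real.sqrt k ∧
    thickness q ≥ (4 / (5 * Real.sqrt k)) * (1 - η ^ 2) * thickness p := by
  have hdist : ∀ i j, |dist (p i) (p j) - dist (q i) (q j)| ≤ ξ₀ * longEdge p := by
    intro i j
    rcases lt_trichotomy i j with hij | rfl | hij
    · exact h i j hij
    · simpa using mul_nonneg hξ0 (longEdge_nonneg p)
    · rw [dist_comm (p i), dist_comm (q i)]; exact h j i hij
  have h1η : 0 ≤ 1 - η ^ 2 := by linarith
  refine ⟨mul_smallSV_le_smallSV h1η fun x => ?_, ?_⟩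
  · simpa only [euclNorm_vertMatrix_mulVec] using one_sub_sq_mul_norm_edgeComb_le hdist hξ hη 0 x
  rcases eq_or_ne k 0 with rfl | hk
  · simp [thickness, longEdge_nonneg]
  have hL := longEdge_pos_of_thickness_pos hk hnd
  have hLq := abs_le.1 (abs_longEdge_sub_longEdge_le hdist)
  have hξ14 := le_one_div_four_of_le_sq hξ hη
  have hLq_pos : 0 < longEdge q := by nlinarith
  have hkey : (1 - η ^ 2) * thickness p * longEdge p ≤ thickness q * longEdge q := by
    have halt := le_ciInf (one_sub_sq_mul_le_altitude hk hdist hξ hη)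
    rw [← thickness_mul_eq_iInf_altitude q hk hLq_pos.ne'] at halt
    refine le_of_mul_le_mul_left ?_ (Nat.cast_pos.2 (Nat.pos_of_ne_zero hk) : (0 : ℝ) < k)
    linarith
  have hsqrt : 1 ≤ Real.sqrt k := Real.one_le_sqrt.2 (Nat.one_le_cast.2 (Nat.pos_of_ne_zero hk))
  have hprod : 0 ≤ (1 - η ^ 2) * thickness p := mul_nonneg h1η hnd.le
  constructor
  · exact (div_le_self (mul_nonneg hprod hL.le) hsqrt).trans hkey
  · calc 4 / (5 * Real.sqrt k) * (1 - η ^ 2) * thickness p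
        ≤ 4 / 5 * ((1 - η ^ 2) * thickness p) := by
          rw [mul_assoc]; gcongr; linarith
      _ ≤ (1 - η ^ 2) * thickness p * longEdge p / longEdge q := by
          rw [le_div_iff₀ hLq_pos, mul_assoc, mul_comm (4 / 5 : ℝ), mul_assoc]
          exact mul_le_mul_of_nonneg_left (by nlinarith) hprod
      _ ≤ thickness q := by rw [div_le_iff₀ hLq_pos]; exact hkey
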